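/- If a nonnegative vector y over the leaves of a tree t sums to 1 and satisfies, for every split s, Σ_{ℓ ∈ left(s)} y_ℓ ≤ q(s,x) and Σ_{ℓ ∈ right(s)} y_ℓ ≤ 1 − q(s,x) for a binary encoding x, then y is the indicator vector of the leaf ℓ* = GetLeaf(x,t): y_{ℓ*} = 1 and y_ℓ = 0 for all ℓ ≠ ℓ*. -/
import Mathlib


inductive BTree : Type
  | leaf : BTree
  | node : BTree → BTree → BTree

namespace BTree

/-- Leaves of a tree, identified by their root-to-node path (`true` = left). -/
def leavesF : BTree → Finset (List Bool)
  | .leaf => {[]}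
  | .node l r => (leavesF l).image (List.cons true) ∪ (leavesF r).image (List.cons false)

/-- Splits (internal nodes) of a tree, identified by their root-to-node path. -/
def splitsF : BTree → Finset (List Bool)
  | .leaf => ∅
  | .node l r =>
      insert [] ((splitsF l).image (List.cons true) ∪ (splitsF r).image (List.cons false))

/-- Leaves in the left subtree of split `s`. -/
def leftF (t : BTree) (s : List Bool) : Finset (List Bool) :=
  (leavesF t).filter (fun ℓ => (s ++ [true]) <+: ℓ)

/-- Leaves in the right subtree of split `s`. -/
def rightF (t : BTree) (s : List Bool) : Finset (List Bool) :=
  (leavesF t).filter (fun ℓ => (s ++ [false]) <+: ℓ)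

/-- Splits `s` such that leaf `ℓ` is in the left subtree of `s`. -/
def LSF (t : BTree) (ℓ : List Bool) : Finset (List Bool) :=
  (splitsF t).filter (fun s => (s ++ [true]) <+: ℓ)

/-- Splits `s` such that leaf `ℓ` is in the right subtree of `s`. -/
def RSF (t : BTree) (ℓ : List Bool) : Finset (List Bool) :=
  (splitsF t).filter (fun s => (s ++ [false]) <+: ℓ)

def getLeafAux (q : List Bool → Bool) : BTree → List Bool → List Bool
  | .leaf, pth => pth
  | .node l r, pth =>
      if q pth then getLeafAux q l (pth ++ [true]) else getLeafAux q r (pth ++ [false])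

/-- The leaf reached by routing down tree `t`, taking the left branch at a split `s`
iff the query value `q s` is `true`. -/
def getLeaf (t : BTree) (q : List Bool → Bool) : List Bool := getLeafAux q t []

/-- The numeric value of the 0/1 query at split `s`. -/
def qval (q : List Bool → Bool) (s : List Bool) : ℝ := if q s then 1 else 0

end BTree

/-- Feasibility of a leaf-weight vector `y` for the single-tree subproblem determined by
the binary encoding `x` (abstracted into the 0/1 split query values `q`):
(i) the weights over the leaves sum to one; (iii) nonnegativity; and (ii) for every split
`s`, the left constraint `Σ_{ℓ ∈ left(s)} y_ℓ ≤ q(s,x)` and the right constraint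
`Σ_{ℓ ∈ right(s)} y_ℓ ≤ 1 − q(s,x)`. -/
def BTree.Feasible (t : BTree) (q : List Bool → Bool) (y : List Bool → ℝ) : Prop :=
  ((∑ ℓ ∈ t.leavesF, y ℓ) = 1) ∧
  (∀ ℓ ∈ t.leavesF, 0 ≤ y ℓ) ∧
  (∀ s ∈ t.splitsF, (∑ ℓ ∈ t.leftF s, y ℓ) ≤ BTree.qval q s) ∧
  (∀ s ∈ t.splitsF, (∑ ℓ ∈ t.rightF s, y ℓ) ≤ 1 - BTree.qval q s)

namespace BTree

lemma getLeafAux_append (q : List Bool → Bool) (t : BTree) (pth : List Bool) :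
    getLeafAux q t pth = pth ++ getLeafAux (fun s => q (pth ++ s)) t [] := by
  induction t generalizing q pth with
  | leaf => simp [getLeafAux]
  | node l r hl hr =>
    simp only [getLeafAux, List.nil_append, List.append_nil]
    by_cases h : q pth
    · simp only [h, if_true]
      rw [hl q (pth ++ [true]), hl (fun s => q (pth ++ s)) [true]]
      simp [List.append_assoc]
    · simp only [h, if_false]
      rw [hr q (pth ++ [false]), hr (fun s => q (pth ++ s)) [false]]
      simp [List.append_assoc]

lemma getLeaf_node (l r : BTree) (q : List Bool → Bool) :
    getLeaf (node l r) q =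
      if q [] then true :: getLeaf l (fun s => q (true :: s))
      else false :: getLeaf r (fun s => q (false :: s)) := by
  unfold getLeaf
  show (if q [] then getLeafAux q l [true] else getLeafAux q r [false]) = _
  by_cases h : q []
  · simp only [h, if_true]
    rw [getLeafAux_append q l [true]]
    simp
  · simp only [h, if_false]
    rw [getLeafAux_append q r [false]]
    simp

lemma filter_prefix_true (l r : BTree) (p : List Bool) :
    (leavesF (node l r)).filter (fun ℓ => (true :: p) <+: ℓ)
      = ((leavesF l).filter (fun ℓ => p <+: ℓ)).image (List.cons true) := by
  ext ℓ
  simp only [leavesF, Finset.mem_filter, Finset.mem_union, Finset.mem_image]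
  constructor
  · rintro ⟨(⟨a, ha, rfl⟩ | ⟨a, ha, rfl⟩), hp⟩
    · exact ⟨a, ⟨ha, (List.cons_prefix_cons.mp hp).2⟩, rfl⟩
    · simp [List.cons_prefix_cons] at hp
  · rintro ⟨a, ⟨ha, hp⟩, rfl⟩
    exact ⟨Or.inl ⟨a, ha, rfl⟩, List.cons_prefix_cons.mpr ⟨rfl, hp⟩⟩

lemma filter_prefix_false (l r : BTree) (p : List Bool) :
    (leavesF (node l r)).filter (fun ℓ => (false :: p) <+: ℓ)
      = ((leavesF r).filter (fun ℓ => p <+: ℓ)).image (List.cons false) := by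
  ext ℓ
  simp only [leavesF, Finset.mem_filter, Finset.mem_union, Finset.mem_image]
  constructor
  · rintro ⟨(⟨a, ha, rfl⟩ | ⟨a, ha, rfl⟩), hp⟩
    · simp [List.cons_prefix_cons] at hp
    · exact ⟨a, ⟨ha, (List.cons_prefix_cons.mp hp).2⟩, rfl⟩
  · rintro ⟨a, ⟨ha, hp⟩, rfl⟩
    exact ⟨Or.inr ⟨a, ha, rfl⟩, List.cons_prefix_cons.mpr ⟨rfl, hp⟩⟩

lemma leftF_nil (l r : BTree) :
    leftF (node l r) [] = (leavesF l).image (List.cons true) := by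
  have := filter_prefix_true l r []
  simpa [leftF] using this

lemma rightF_nil (l r : BTree) :
    rightF (node l r) [] = (leavesF r).image (List.cons false) := by
  have := filter_prefix_false l r []
  simpa [rightF] using this

lemma leftF_cons_true (l r : BTree) (s : List Bool) :
    leftF (node l r) (true :: s) = (leftF l s).image (List.cons true) := by
  have := filter_prefix_true l r (s ++ [true])
  simpa [leftF] using this

lemma rightF_cons_true (l r : BTree) (s : List Bool) :
    rightF (node l r) (true :: s) = (rightF l s).image (List.cons true) := by
  have := filter_prefix_true l r (s ++ [false])
  simpa [rightF] using this

lemma leftF_cons_false (l r : BTree) (s : List Bool) :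
    leftF (node l r) (false :: s) = (leftF r s).image (List.cons false) := by
  have := filter_prefix_false l r (s ++ [true])
  simpa [leftF] using this

lemma rightF_cons_false (l r : BTree) (s : List Bool) :
    rightF (node l r) (false :: s) = (rightF r s).image (List.cons false) := by
  have := filter_prefix_false l r (s ++ [false])
  simpa [rightF] using this

lemma sum_image_cons (b : Bool) (S : Finset (List Bool)) (y : List Bool → ℝ) :
    ∑ ℓ ∈ S.image (List.cons b), y ℓ = ∑ a ∈ S, y (b :: a) :=
  Finset.sum_image (fun a _ c _ h => by injection h)

lemma sum_leaves_node (l r : BTree) (y : List Bool → ℝ) :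
    ∑ ℓ ∈ leavesF (node l r), y ℓ
      = (∑ a ∈ leavesF l, y (true :: a)) + ∑ a ∈ leavesF r, y (false :: a) := by
  rw [show leavesF (node l r)
      = (leavesF l).image (List.cons true) ∪ (leavesF r).image (List.cons false) from rfl,
    Finset.sum_union, sum_image_cons, sum_image_cons]
  rw [Finset.disjoint_left]
  rintro x hx hx'
  simp only [Finset.mem_image] at hx hx'
  obtain ⟨a, _, rfl⟩ := hx
  obtain ⟨c, _, hc⟩ := hx'
  injection hc with h1
  exact Bool.noConfusion h1

lemma mem_leaves_node_left {l r : BTree} {a : List Bool} (ha : a ∈ leavesF l) :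
    true :: a ∈ leavesF (node l r) := by
  simp only [leavesF, Finset.mem_union, Finset.mem_image]
  exact Or.inl ⟨a, ha, rfl⟩

lemma mem_leaves_node_right {l r : BTree} {a : List Bool} (ha : a ∈ leavesF r) :
    false :: a ∈ leavesF (node l r) := by
  simp only [leavesF, Finset.mem_union, Finset.mem_image]
  exact Or.inr ⟨a, ha, rfl⟩

lemma mem_splits_node_left {l r : BTree} {s : List Bool} (hs : s ∈ splitsF l) :
    true :: s ∈ splitsF (node l r) := by
  simp only [splitsF, Finset.mem_insert, Finset.mem_union, Finset.mem_image]
  exact Or.inr (Or.inl ⟨s, hs, rfl⟩)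

lemma mem_splits_node_right {l r : BTree} {s : List Bool} (hs : s ∈ splitsF r) :
    false :: s ∈ splitsF (node l r) := by
  simp only [splitsF, Finset.mem_insert, Finset.mem_union, Finset.mem_image]
  exact Or.inr (Or.inr ⟨s, hs, rfl⟩)

end BTree

/-- any nonnegative leaf-weight vector summing to one that satisfies all the
split constraints is the indicator vector of the leaf `ℓ* = GetLeaf(x,t)`:
`y_{ℓ*} = 1` and `y_ℓ = 0` for every other leaf `ℓ`. -/
theorem feasible_eq_indicator (t : BTree) (q : List Bool → Bool) (y : List Bool → ℝ)
    (hy : BTree.Feasible t q y) :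
    y (t.getLeaf q) = 1 ∧ ∀ ℓ ∈ t.leavesF, ℓ ≠ t.getLeaf q → y ℓ = 0 := by
  induction t generalizing q y with
  | leaf =>
    obtain ⟨hsum, hnn, hL, hR⟩ := hy
    refine ⟨?_, ?_⟩
    · simpa [BTree.leavesF, BTree.getLeaf, BTree.getLeafAux] using hsum
    · intro ℓ hℓ hne
      simp only [BTree.leavesF, Finset.mem_singleton] at hℓ
      simp [BTree.getLeaf, BTree.getLeafAux, hℓ] at hne
  | node l r ihl ihr =>
    obtain ⟨hsum, hnn, hL, hR⟩ := hy
    have hmem : ([] : List Bool) ∈ BTree.splitsF (BTree.node l r) := by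
      simp [BTree.splitsF]
    by_cases hq : q []
    · -- goes left; right subtree leaves have weight 0
      have hqv : BTree.qval q [] = 1 := by simp [BTree.qval, hq]
      have hrle := hR [] hmem
      rw [BTree.rightF_nil, BTree.sum_image_cons, hqv] at hrle
      have hzero : ∀ a ∈ BTree.leavesF r, y (false :: a) = 0 := by
        have hnn' : ∀ a ∈ BTree.leavesF r, 0 ≤ y (false :: a) :=
          fun a ha => hnn _ (BTree.mem_leaves_node_right ha)
        have hsum0 : ∑ a ∈ BTree.leavesF r, y (false :: a) = 0 :=
          le_antisymm (by linarith) (Finset.sum_nonneg hnn')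
        exact fun a ha => (Finset.sum_eq_zero_iff_of_nonneg hnn').mp hsum0 a ha
      set q' := fun s => q (true :: s) with hq'
      set y' := fun a => y (true :: a) with hy'
      have hfeas : BTree.Feasible l q' y' := by
        refine ⟨?_, ?_, ?_, ?_⟩
        · have := BTree.sum_leaves_node l r y
          rw [hsum, Finset.sum_eq_zero hzero, add_zero] at this
          exact this.symm
        · exact fun a ha => hnn _ (BTree.mem_leaves_node_left ha)
        · intro s hs
          have := hL (true :: s) (BTree.mem_splits_node_left hs)
          rwa [BTree.leftF_cons_true, BTree.sum_image_cons] at this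
        · intro s hs
          have := hR (true :: s) (BTree.mem_splits_node_left hs)
          rwa [BTree.rightF_cons_true, BTree.sum_image_cons] at this
      obtain ⟨h1, h2⟩ := ihl q' y' hfeas
      have hgl : (BTree.node l r).getLeaf q = true :: l.getLeaf q' := by
        rw [BTree.getLeaf_node]; simp [hq, hq']
      refine ⟨by rw [hgl]; exact h1, ?_⟩
      intro ℓ hℓ hne
      simp only [BTree.leavesF, Finset.mem_union, Finset.mem_image] at hℓ
      rcases hℓ with ⟨a, ha, rfl⟩ | ⟨a, ha, rfl⟩
      · refine h2 a ha ?_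
        intro h; apply hne; rw [hgl, h]
      · exact hzero a ha
    · -- goes right; left subtree leaves have weight 0
      have hqv : BTree.qval q [] = 0 := by simp [BTree.qval, hq]
      have hlle := hL [] hmem
      rw [BTree.leftF_nil, BTree.sum_image_cons, hqv] at hlle
      have hzero : ∀ a ∈ BTree.leavesF l, y (true :: a) = 0 := by
        have hnn' : ∀ a ∈ BTree.leavesF l, 0 ≤ y (true :: a) :=
          fun a ha => hnn _ (BTree.mem_leaves_node_left ha)
        have hsum0 : ∑ a ∈ BTree.leavesF l, y (true :: a) = 0 :=
          le_antisymm (by linarith) (Finset.sum_nonneg hnn')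
        exact fun a ha => (Finset.sum_eq_zero_iff_of_nonneg hnn').mp hsum0 a ha
      set q' := fun s => q (false :: s) with hq'
      set y' := fun a => y (false :: a) with hy'
      have hfeas : BTree.Feasible r q' y' := by
        refine ⟨?_, ?_, ?_, ?_⟩
        · have := BTree.sum_leaves_node l r y
          rw [hsum, Finset.sum_eq_zero hzero, zero_add] at this
          exact this.symm
        · exact fun a ha => hnn _ (BTree.mem_leaves_node_right ha)
        · intro s hs
          have := hL (false :: s) (BTree.mem_splits_node_right hs)
          rwa [BTree.leftF_cons_false, BTree.sum_image_cons] at this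
        · intro s hs
          have := hR (false :: s) (BTree.mem_splits_node_right hs)
          rwa [BTree.rightF_cons_false, BTree.sum_image_cons] at this
      obtain ⟨h1, h2⟩ := ihr q' y' hfeas
      have hgl : (BTree.node l r).getLeaf q = false :: r.getLeaf q' := by
        rw [BTree.getLeaf_node]; simp [hq, hq']
      refine ⟨by rw [hgl]; exact h1, ?_⟩
      intro ℓ hℓ hne
      simp only [BTree.leavesF, Finset.mem_union, Finset.mem_image] at hℓ
      rcases hℓ with ⟨a, ha, rfl⟩ | ⟨a, ha, rfl⟩
      · exact hzero a ha
      · refine h2 a ha ?_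
        intro h; apply hne; rw [hgl, h]
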